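/- Let M be a topological space and let φ : ℝ → M → M be a flow on M (i.e. φ is jointly continuous, φ 0 is the identity, and φ (s + s') x = φ s (φ s' x) for all s, s' ∈ ℝ and x ∈ M). Suppose t : M → ℝ is a continuous function satisfying t (φ s x) = t x + s for all s ∈ ℝ and x ∈ M. Then the map F : {x ∈ M : t x = 0} × ℝ → M defined by F (x, s) = φ s x is a homeomorphism, and for each s ∈ ℝ it maps {x : t x = 0} × {s} bijectively onto the level set t⁻¹ {s}. In particular, for any a < b, F restricts to a homeomorphism from {x : t x = 0} × [a, b] onto t⁻¹ [a, b]. -/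
import Mathlib


/-- If `φ` is a flow on `M` and `t : M → ℝ` is a continuous time function strictly
compatible with the flow (`t (φ s x) = t x + s`), then `(x, s) ↦ φ s x` is a
homeomorphism from `{x | t x = 0} × ℝ` onto `M`, mapping each slice
`{x | t x = 0} × {s}` bijectively onto the level set `t ⁻¹' {s}`, and restricting,
for any `a < b`, to a homeomorphism from `{x | t x = 0} × [a, b]` onto
`t ⁻¹' [a, b]`. -/
theorem flow_time_function_product_structure
    (M : Type*) [TopologicalSpace M]
    (φ : ℝ → M → M)
    (hcont : Continuous fun p : ℝ × M => φ p.1 p.2)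
    (hzero : ∀ x : M, φ 0 x = x)
    (hadd : ∀ s s' : ℝ, ∀ x : M, φ (s + s') x = φ s (φ s' x))
    (t : M → ℝ) (ht : Continuous t)
    (htφ : ∀ s : ℝ, ∀ x : M, t (φ s x) = t x + s) :
    IsHomeomorph (fun p : {x : M // t x = 0} × ℝ => φ p.2 p.1) ∧
    (∀ s : ℝ,
      Set.BijOn (fun p : {x : M // t x = 0} × ℝ => φ p.2 p.1)
        (Set.univ ×ˢ {s}) (t ⁻¹' {s})) ∧
    (∀ a b : ℝ, a < b →
      ∃ h : ({x : M // t x = 0} × Set.Icc a b) ≃ₜ (t ⁻¹' Set.Icc a b),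
        ∀ p : {x : M // t x = 0} × Set.Icc a b,
          (h p : M) = φ (p.2 : ℝ) (p.1 : M)) := by
  have hFG : ∀ y : M, φ (t y) (φ (-t y) y) = y := by
    intro y
    rw [← hadd, add_neg_cancel, hzero]
  have hGF : ∀ (s : ℝ) (x : M), φ (-s) (φ s x) = x := by
    intro s x
    rw [← hadd, neg_add_cancel, hzero]
  have ht0 : ∀ y : M, t (φ (-t y) y) = 0 := by
    intro y; rw [htφ]; ring
  have hcontF : Continuous (fun p : {x : M // t x = 0} × ℝ => φ p.2 p.1) := by
    exact hcont.comp (continuous_snd.prodMk (continuous_subtype_val.comp continuous_fst))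
  let e : ({x : M // t x = 0} × ℝ) ≃ₜ M :=
    { toFun := fun p => φ p.2 p.1
      invFun := fun y => (⟨φ (-t y) y, ht0 y⟩, t y)
      left_inv := by
        rintro ⟨⟨x, hx⟩, s⟩
        have hts : t (φ s x) = s := by rw [htφ, hx, zero_add]
        refine Prod.ext ?_ ?_
        · exact Subtype.ext (by simp [hts, hGF])
        · simpa using hts
      right_inv := fun y => hFG y
      continuous_toFun := hcontF
      continuous_invFun := by
        refine Continuous.prodMk ?_ ht
        exact Continuous.subtype_mk
          (hcont.comp (ht.neg.prodMk continuous_id)) _ }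
  refine ⟨e.isHomeomorph, ?_, ?_⟩
  · intro s
    refine ⟨?_, ?_, ?_⟩
    · rintro ⟨⟨x, hx⟩, s'⟩ ⟨-, hs'⟩
      simp only [Set.mem_singleton_iff] at hs'
      subst hs'
      simp [Set.mem_preimage, htφ, hx]
    · intro p hp q hq hpq
      exact e.injective hpq
    · intro y hy
      simp only [Set.mem_preimage, Set.mem_singleton_iff] at hy
      refine ⟨(⟨φ (-t y) y, ht0 y⟩, s), ⟨trivial, rfl⟩, ?_⟩
      simp only
      rw [← hy]
      exact hFG y
  · intro a b _
    have hmem : ∀ p : {x : M // t x = 0} × Set.Icc a b,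
        φ (p.2 : ℝ) (p.1 : M) ∈ t ⁻¹' Set.Icc a b := by
      rintro ⟨⟨x, hx⟩, ⟨s, hs⟩⟩
      simpa [Set.mem_preimage, htφ, hx] using hs
    refine ⟨{
      toFun := fun p => ⟨φ (p.2 : ℝ) (p.1 : M), hmem p⟩
      invFun := fun y => (⟨φ (-t y) y, ht0 y⟩, ⟨t y, y.2⟩)
      left_inv := by
        rintro ⟨⟨x, hx⟩, ⟨s, hs⟩⟩
        have hts : t (φ s x) = s := by rw [htφ, hx, zero_add]
        refine Prod.ext ?_ ?_
        · exact Subtype.ext (by simp [hts, hGF])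
        · exact Subtype.ext (by simpa using hts)
      right_inv := by
        rintro ⟨y, hy⟩
        exact Subtype.ext (hFG y)
      continuous_toFun := by
        refine Continuous.subtype_mk ?_ _
        exact hcont.comp
          ((continuous_subtype_val.comp continuous_snd).prodMk
            (continuous_subtype_val.comp continuous_fst))
      continuous_invFun := by
        have htc : Continuous fun y : t ⁻¹' Set.Icc a b => t (y : M) :=
          ht.comp continuous_subtype_val
        refine Continuous.prodMk ?_ ?_
        · exact Continuous.subtype_mk
            (hcont.comp (htc.neg.prodMk continuous_subtype_val)) _
        · exact Continuous.subtype_mk htc _ }, fun p => rfl⟩
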